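/- arXiv:1909.08996 — 4 statements merged into one kernel-verified Lean document; each statement's English description precedes it below -/
import Mathlib

section
/- Let n ≥ 1 and m ≥ 2 be integers and let i be an integer with 1 ≤ i ≤ n. The number of functions f from an n-element set of voters to an m-element set of classes {c*, c_1, …, c_{m-1}} such that the fiber of the designated class c* has exactly i elements and the fiber of every other class c_j (j = 1, …, m-1) has at most i − 1 elements equals C(n,i) · φ_i · (n−i)!, where φ_i is the coefficient of x^{n−i} in the polynomial expansion of the generating function G^m_i(x) = (Σ_{j=0}^{i−1} x^j / j!)^{m−1}. -/
open Finset

/-- `phi n m i` is the coefficient of `x^(n-i)` in the expansion of the generating function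
`G^m_i(x) = (∑_{j=0}^{i-1} x^j / j!)^(m-1)`. -/
noncomputable def phi (n m i : ℕ) : ℝ :=
  (((∑ j ∈ Finset.range i, Polynomial.C ((1 : ℝ) / (Nat.factorial j)) * Polynomial.X ^ j)) ^ (m - 1)).coeff (n - i)

/-!
Once the set `S` of voters of a designated class is fixed, the profiles that remain are exactly
the maps from the complement of `S` to the other classes. Hence the count is `C(n,i)` times the
number of maps from `n - i` voters to `m - 1` classes with all fibres of size `< i`. That number
is `(n-i)!` times the coefficient of `x^(n-i)` in `G^m_i`, by induction on the number of classes: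
splitting off one class in the same way is the convolution of coefficients in a product of
exponential generating functions.
-/

section Profiles

variable {α β : Type*} [Fintype α] [DecidableEq α] [Fintype β] [DecidableEq β]

omit [Fintype β] in
lemma card_fiber_eq_card_fiber_dite (S : Finset α) (c : β) (f : {x // x ∉ S} → {b // b ≠ c})
    (b : {b // b ≠ c}) :
    #{x | f x = b} = #{x | (if h : x ∈ S then c else (f ⟨x, h⟩ : β)) = b} := by
  refine card_bij (fun x _ => x.1) (fun x hx => ?_) (fun _ _ _ _ => Subtype.ext) (fun y hy => ?_)
  · simp_all [x.2]
  · have hyS : y ∉ S := fun h => b.2 (by simpa [h] using (mem_filter.mp hy).2.symm)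
    refine ⟨⟨y, hyS⟩, ?_, rfl⟩
    simpa [hyS, Subtype.ext_iff] using hy

lemma card_profiles_fiber_eq (c : β) (S : Finset α) (P : ℕ → Prop) [DecidablePred P] :
    #{g : α → β | ({x | g x = c} : Finset α) = S ∧ ∀ b ≠ c, P #{x | g x = b}}
      = #{f : {x // x ∉ S} → {b // b ≠ c} | ∀ b, P #{x | f x = b}} := by
  have hne : ∀ g : α → β, ({x | g x = c} : Finset α) = S → ∀ x : {x // x ∉ S}, g x ≠ c :=
    fun g hg x hx => x.2 (hg ▸ by simpa using hx)
  have hextend : ∀ g : α → β, ({x | g x = c} : Finset α) = S →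
      ∀ x, (if x ∈ S then c else g x) = g x := by
    intro g hg x
    split_ifs with hx
    · rw [← hg] at hx
      exact (mem_filter.mp hx).2.symm
    · rfl
  refine card_bij' (fun g hg x => ⟨g x, hne g (mem_filter.mp hg).2.1 x⟩)
    (fun f _ x => if h : x ∈ S then c else (f ⟨x, h⟩ : β)) (fun g hg => ?_) (fun f hf => ?_)
    (fun g hg => funext (hextend g (mem_filter.mp hg).2.1)) (fun f _ => ?_)
  · obtain ⟨hgS, hP⟩ := (mem_filter.mp hg).2
    simp only [mem_filter, mem_univ, true_and]
    intro b
    rw [card_fiber_eq_card_fiber_dite]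
    simpa only [dite_eq_ite, hextend g hgS] using hP b b.2
  · have hP := (mem_filter.mp hf).2
    simp only [mem_filter, mem_univ, true_and]
    refine ⟨?_, fun b hb => ?_⟩
    · ext x
      by_cases hx : x ∈ S <;> simp [hx, (f ⟨x, _⟩).2]
    · have := hP ⟨b, hb⟩
      rwa [card_fiber_eq_card_fiber_dite] at this
  · funext x; simp [x.2]

lemma card_profiles_eq_sum_fiber (c : β) (R P : ℕ → Prop) [DecidablePred R] [DecidablePred P] :
    #{g : α → β | R #{x | g x = c} ∧ ∀ b ≠ c, P #{x | g x = b}}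
      = ∑ S : Finset α with R #S, #{f : {x // x ∉ S} → {b // b ≠ c} | ∀ b, P #{x | f x = b}} := by
  rw [card_eq_sum_card_fiberwise (f := fun g => ({x | g x = c} : Finset α)) (t := {S | R #S})
    (fun g hg => by simpa using (mem_filter.mp hg).2.1)]
  refine sum_congr rfl fun S hS => ?_
  rw [← card_profiles_fiber_eq, filter_filter]
  congr 1
  refine filter_congr fun g _ => ?_
  constructor
  · rintro ⟨⟨-, hP⟩, hgS⟩
    exact ⟨hgS, hP⟩
  · rintro ⟨hgS, hP⟩
    exact ⟨⟨hgS ▸ (mem_filter.mp hS).2, hP⟩, hgS⟩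

end Profiles

section TruncatedExp

open Polynomial
open scoped Nat

noncomputable def truncExp (i : ℕ) : ℝ[X] :=
  ∑ j ∈ range i, C (1 / (j ! : ℝ)) * X ^ j

lemma coeff_truncExp (i d : ℕ) : (truncExp i).coeff d = if d < i then 1 / (d ! : ℝ) else 0 := by
  simp [truncExp, coeff_C_mul, coeff_X_pow]

lemma factorial_mul_coeff_truncExp_mul {α : Type*} (i : ℕ) (p : ℝ[X]) (s : Finset α) :
    ((#s)! : ℝ) * (truncExp i * p).coeff #s
      = ∑ S ∈ s.powerset with #S < i, ((#s - #S)! : ℝ) * p.coeff (#s - #S) := by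
  rw [sum_filter,
    sum_powerset_apply_card (fun j => if j < i then ((#s - j)! : ℝ) * p.coeff (#s - j) else 0),
    coeff_mul, Nat.sum_antidiagonal_eq_sum_range_succ (fun j k => (truncExp i).coeff j * p.coeff k),
    mul_sum]
  refine sum_congr rfl fun j hj => ?_
  rw [coeff_truncExp, nsmul_eq_mul, Nat.cast_choose ℝ (Nat.lt_succ_iff.mp (mem_range.mp hj))]
  split_ifs
  · field_simp
  · simp

theorem card_fibers_lt_eq_factorial_mul_coeff (i : ℕ) (α β : Type*) [Fintype α] [DecidableEq α]
    [Fintype β] [DecidableEq β] :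
    (#{f : α → β | ∀ b, #{x | f x = b} < i} : ℝ)
      = (Fintype.card α)! * (truncExp i ^ Fintype.card β).coeff (Fintype.card α) := by
  obtain ⟨k, hk⟩ : ∃ k, Fintype.card β = k := ⟨_, rfl⟩
  rw [hk]
  induction k generalizing α β with
  | zero =>
    have : IsEmpty β := Fintype.card_eq_zero_iff.mp hk
    rw [pow_zero, coeff_one, filter_true_of_mem fun f _ b => isEmptyElim b, card_univ,
      Fintype.card_fun, hk]
    obtain h | h := eq_or_ne (Fintype.card α) 0 <;> simp [h]
  | succ k ih =>
    obtain ⟨c⟩ : Nonempty β := Fintype.card_pos_iff.mp (by omega)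
    have hsplit : #{f : α → β | ∀ b, #{x | f x = b} < i}
        = #{f : α → β | #{x | f x = c} < i ∧ ∀ b ≠ c, #{x | f x = b} < i} := by
      congr 1
      refine filter_congr fun f _ => ⟨fun h => ⟨h c, fun b _ => h b⟩, fun ⟨hc, h⟩ b => ?_⟩
      by_cases hb : b = c
      · exact hb ▸ hc
      · exact h b hb
    have hcompl : Fintype.card {b // b ≠ c} = k := by
      simp only [ne_eq, Fintype.card_subtype_compl, Fintype.card_unique]
      omega
    rw [hsplit, card_profiles_eq_sum_fiber c (· < i) (· < i), Nat.cast_sum]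
    simp_rw [ih _ _ hcompl, Fintype.card_subtype_compl, Fintype.card_coe]
    rw [pow_succ', ← card_univ, factorial_mul_coeff_truncExp_mul, powerset_univ]

end TruncatedExp

theorem stmt0_general (n m i : ℕ) (hi1 : 1 ≤ i)
    (cstar : Fin m) :
    ((Finset.univ.filter (fun f : Fin n → Fin m =>
        (Finset.univ.filter (fun v : Fin n => f v = cstar)).card = i ∧
        ∀ c : Fin m, c ≠ cstar →
          (Finset.univ.filter (fun v : Fin n => f v = c)).card ≤ i - 1)).card : ℝ)
      = (n.choose i : ℝ) * phi n m i * ((n - i).factorial : ℝ) := by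
  have hcount :
      #{f : Fin n → Fin m | #{v | f v = cstar} = i ∧ ∀ c ≠ cstar, #{v | f v = c} ≤ i - 1}
      = ∑ S : Finset (Fin n) with #S = i,
          #{f : {v // v ∉ S} → {c // c ≠ cstar} | ∀ c, #{v | f v = c} < i} := by
    convert card_profiles_eq_sum_fiber (α := Fin n) cstar (· = i) (· < i) using 8
    exact Nat.le_sub_one_iff_lt hi1
  rw [hcount, Nat.cast_sum]
  simp_rw [card_fibers_lt_eq_factorial_mul_coeff, Fintype.card_subtype_compl, Fintype.card_coe,
    Fintype.card_fin, Fintype.card_unique]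
  rw [sum_eq_card_nsmul fun S hS => by rw [(mem_filter.mp hS).2], ← Fintype.card_subtype,
    Fintype.card_finset_len, Fintype.card_fin, nsmul_eq_mul,
    show phi n m i = (truncExp i ^ (m - 1)).coeff (n - i) from rfl]
  ring

/-- The number of voting profiles (functions from `n` voters to `m` classes) in which the
designated class `cstar` receives exactly `i` votes and every other class receives at most
`i - 1` votes equals `C(n,i) · φ_i · (n-i)!`. -/
theorem stmt0 (n m i : ℕ) (hn : 1 ≤ n) (hm : 2 ≤ m) (hi1 : 1 ≤ i) (hin : i ≤ n)
    (cstar : Fin m) :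
    ((Finset.univ.filter (fun f : Fin n → Fin m =>
        (Finset.univ.filter (fun v : Fin n => f v = cstar)).card = i ∧
        ∀ c : Fin m, c ≠ cstar →
          (Finset.univ.filter (fun v : Fin n => f v = c)).card ≤ i - 1)).card : ℝ)
      = (n.choose i : ℝ) * phi n m i * ((n - i).factorial : ℝ) :=
  stmt0_general n m i hi1 cstar
end

section
/- Fix integers n ≥ 1, m ≥ 2 and a real number p ∈ [0,1]. Suppose n classifiers vote independently, each voting for the designated correct class c* with probability p/D and for each of the other m−1 classes with probability (1−p)/D, where D = p + (m−1)(1−p). Then the probability that c* receives strictly more votes than every other class (i.e., c* is the unique Plurality winner) equals T(p) = (1/K) Σ_{i=⌈n/m⌉}^{n} φ_i · (n−i)! · C(n,i) · p^i · (1−p)^{n−i}, where φ_i is the coefficient of x^{n−i} in the expansion of G^m_i(x) = (Σ_{j=0}^{i−1} x^j / j!)^{m−1} and K = Σ_{j=0}^{n} C(n,j) · p^j · (m−1)^{n−j} · (1−p)^{n−j}. -/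
/-!
Split the winning profiles by the set `s` of voters choosing `c*`. If `#s = i`, the other
`n - i` voters must be spread over the remaining `m - 1` classes so that each receives fewer
than `i` votes. By the product rule for exponential generating functions, the number of maps
from a `k`-set to `r` classes with all fibres of size `< i` is `k! [x^k] (∑_{j<i} x^j / j!)^r`.
Every such profile has weight `p^i (1-p)^(n-i) / D^n`, and `D^n = K` by the binomial theorem.
The terms with `i < ⌈n/m⌉` vanish, since then `G^m_i` has degree at most `(m-1)(i-1) < n - i`.
-/

open Finset

/-- The normalization constant `K = ∑_{j=0}^n C(n,j) p^j (m-1)^(n-j) (1-p)^(n-j)`. -/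
noncomputable def Knorm (n m : ℕ) (p : ℝ) : ℝ :=
  ∑ j ∈ Finset.range (n + 1),
    (n.choose j : ℝ) * p ^ j * ((m : ℝ) - 1) ^ (n - j) * (1 - p) ^ (n - j)

/-- `T(p) = (1/K) ∑_{i=⌈n/m⌉}^n φ_i (n-i)! C(n,i) p^i (1-p)^(n-i)`. -/
noncomputable def Tprob (n m : ℕ) (p : ℝ) : ℝ :=
  (1 / Knorm n m p) *
    ∑ i ∈ Finset.Icc (⌈(n : ℚ) / (m : ℚ)⌉₊) n,
      phi n m i * ((n - i).factorial : ℝ) * (n.choose i : ℝ) * p ^ i * (1 - p) ^ (n - i)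

/-- The set of voting profiles in which `cstar` receives strictly more votes than every other
class, i.e. `cstar` is the unique Plurality winner. -/
def wins (n m : ℕ) (cstar : Fin m) : Finset (Fin n → Fin m) :=
  Finset.univ.filter (fun f => ∀ c : Fin m, c ≠ cstar →
    (Finset.univ.filter (fun v : Fin n => f v = c)).card <
      (Finset.univ.filter (fun v : Fin n => f v = cstar)).card)

open scoped Nat

lemma coeff_trunc_exp (i k : ℕ) :
    ((PowerSeries.exp ℝ).trunc i).coeff k = if k < i then 1 / (k ! : ℝ) else 0 := by
  simp [PowerSeries.coeff_trunc, PowerSeries.coeff_exp]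

lemma phi_eq_coeff_trunc_exp_pow (n m i : ℕ) :
    phi n m i = (((PowerSeries.exp ℝ).trunc i) ^ (m - 1)).coeff (n - i) := by
  have htrunc : ∑ j ∈ range i, Polynomial.C ((1 : ℝ) / j !) * Polynomial.X ^ j =
      (PowerSeries.exp ℝ).trunc i := by
    ext k
    simp [Polynomial.coeff_X_pow, coeff_trunc_exp]
  rw [phi, htrunc]

lemma natDegree_trunc_le {R : Type*} [CommSemiring R] (f : PowerSeries R) (i : ℕ) :
    (f.trunc i).natDegree ≤ i - 1 := by
  cases i with
  | zero => simp
  | succ k => exact Nat.le_of_lt_succ (PowerSeries.natDegree_trunc_lt f k)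

lemma phi_eq_zero_of_lt_ceil {n m i : ℕ} (hi : i < ⌈(n : ℚ) / m⌉₊) : phi n m i = 0 := by
  have hm : m ≠ 0 := by rintro rfl; simp at hi
  have hlt : i * m < n := by
    have := (lt_div_iff₀ (by positivity : (0 : ℚ) < m)).mp (Nat.lt_ceil.mp hi)
    exact_mod_cast this
  have hdeg : (m - 1) * (i - 1) < n - i := by
    obtain ⟨m', rfl⟩ := Nat.exists_eq_add_one_of_ne_zero hm
    rcases i with _ | i'
    · simpa using hlt
    · rw [add_tsub_cancel_right, add_tsub_cancel_right, lt_tsub_iff_right]; nlinarith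
  rw [phi_eq_coeff_trunc_exp_pow]
  refine Polynomial.coeff_eq_zero_of_natDegree_lt (lt_of_le_of_lt ?_ hdeg)
  exact Polynomial.natDegree_pow_le.trans (Nat.mul_le_mul_left _ (natDegree_trunc_le _ _))

lemma factorial_mul_coeff_trunc_exp_mul (i k : ℕ) (Q : Polynomial ℝ) :
    (k ! : ℝ) * ((PowerSeries.exp ℝ).trunc i * Q).coeff k =
      ∑ j ∈ range (k + 1),
        k.choose j • (if j < i then ((k - j)! : ℝ) * Q.coeff (k - j) else 0) := by
  rw [Polynomial.coeff_mul, Finset.Nat.sum_antidiagonal_eq_sum_range_succ_mk, mul_sum]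
  refine sum_congr rfl fun j hj => ?_
  have hjk : j ≤ k := Nat.lt_succ_iff.mp (mem_range.mp hj)
  rw [coeff_trunc_exp, nsmul_eq_mul]
  split_ifs
  · have hfact : (k.choose j : ℝ) * j ! * (k - j)! = k ! := by
      exact_mod_cast Nat.choose_mul_factorial_mul_factorial hjk
    rw [← hfact]
    field_simp
  · simp

lemma card_filter_subtype_of_imp {V : Type*} [Fintype V] {p P : V → Prop} [DecidablePred p]
    [DecidablePred P] (h : ∀ v, P v → p v) :
    #{w : Subtype p | P w} = #{v | P v} := by
  rw [← Fintype.card_subtype, ← Fintype.card_subtype]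
  exact Fintype.card_congr (Equiv.subtypeSubtypeEquivSubtype (h _))

section FiberCounting

variable {V C : Type*} [Fintype V] [DecidableEq V] [Fintype C] [DecidableEq C]

variable (V C) in
def boundedFiberMaps (i : ℕ) : Finset (V → C) :=
  {g | ∀ c, #{v | g v = c} < i}

lemma card_fiber_eq_and_bounded (c₀ : C) (s : Finset V) (i : ℕ) :
    #{f : V → C | ({v | f v = c₀} : Finset V) = s ∧ ∀ c ≠ c₀, #{v | f v = c} < i} =
      #(boundedFiberMaps {v // v ∉ s} {c // c ≠ c₀} i) := by
  have fiber_iff {f : V → C} (hf : ({v | f v = c₀} : Finset V) = s) (v : V) :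
      f v = c₀ ↔ v ∈ s := by
    simp [← hf]
  have card_fiber {f : V → C} (hf : ({v | f v = c₀} : Finset V) = s) {c : C} (hc : c ≠ c₀) :
      #{w : {v // v ∉ s} | f w = c} = #{v | f v = c} :=
    card_filter_subtype_of_imp (p := (· ∉ s)) fun v (hv : f v = c) hvs =>
      hc (hv ▸ (fiber_iff hf v).mpr hvs)
  refine card_bij'
    (fun f hf v => ⟨f v, fun h => v.2 ((fiber_iff (mem_filter.mp hf).2.1 v).mp h)⟩)
    (fun g _ v => if hv : v ∈ s then c₀ else g ⟨v, hv⟩) ?_ ?_ ?_ ?_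
  · intro f hf
    simp only [mem_filter, mem_univ, true_and] at hf
    simp only [boundedFiberMaps, mem_filter, mem_univ, true_and, Subtype.ext_iff]
    exact fun c => (card_fiber hf.1 c.2).trans_lt (hf.2 c c.2)
  · intro g hg
    simp only [boundedFiberMaps, mem_filter, mem_univ, true_and] at hg
    simp only [mem_filter, mem_univ, true_and]
    refine ⟨?_, fun c hc => ?_⟩
    · ext v
      by_cases hv : v ∈ s
      · simp [hv]
      · simp [hv, (g ⟨v, hv⟩).2]
    · have hout (v : V) (hv : (if hv : v ∈ s then c₀ else (g ⟨v, hv⟩).1) = c) :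
          v ∉ s := by
        intro hvs
        simp [hvs] at hv
        exact hc hv.symm
      rw [← card_filter_subtype_of_imp hout]
      convert hg ⟨c, hc⟩ using 3 with w
      simp [w.2, Subtype.ext_iff]
  · intro f hf
    funext v
    by_cases hv : v ∈ s
    · simp [hv, ((fiber_iff (mem_filter.mp hf).2.1 v).mpr hv)]
    · simp [hv]
  · intro g _
    funext w
    simp [w.2]

lemma card_compl_subtype (s : Finset V) : Fintype.card {v // v ∉ s} = Fintype.card V - #s := by
  simp [Fintype.card_subtype_compl]

lemma card_boundedFiberMaps (i : ℕ) :
    (#(boundedFiberMaps V C i) : ℝ) =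
      (Fintype.card V)! *
        (((PowerSeries.exp ℝ).trunc i) ^ Fintype.card C).coeff (Fintype.card V) := by
  induction hC : Fintype.card C generalizing V C with
  | zero =>
    have : IsEmpty C := Fintype.card_eq_zero_iff.mp hC
    have hall : boundedFiberMaps V C i = univ := by
      ext g; simp [boundedFiberMaps]
    rcases (Fintype.card V).eq_zero_or_pos with hV | hV
    · simp [hall, hV]
    · simp [hall, hV.ne', Polynomial.coeff_one]
  | succ r ih =>
    obtain ⟨c₀⟩ : Nonempty C := Fintype.card_pos_iff.mp (by omega)
    set k := Fintype.card V
    have fiber_count (s : Finset V) :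
        (#{g ∈ boundedFiberMaps V C i | ({v | g v = c₀} : Finset V) = s} : ℝ) =
          if #s < i then ((k - #s)! : ℝ) * (((PowerSeries.exp ℝ).trunc i) ^ r).coeff (k - #s)
          else 0 := by
      split_ifs with hs
      · have hfilter : {g ∈ boundedFiberMaps V C i | ({v | g v = c₀} : Finset V) = s} =
            ({g | ({v | g v = c₀} : Finset V) = s ∧ ∀ c ≠ c₀, #{v | g v = c} < i} :
              Finset (V → C)) := by
          ext g
          simp only [boundedFiberMaps, mem_filter, mem_univ, true_and]
          constructor
          · exact fun ⟨hg, hgs⟩ => ⟨hgs, fun c _ => hg c⟩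
          · rintro ⟨hgs, hg⟩
            refine ⟨fun c => ?_, hgs⟩
            rcases eq_or_ne c c₀ with rfl | hc
            · rwa [hgs]
            · exact hg c hc
        have hcard : Fintype.card {c // c ≠ c₀} = r := by
          simp [Fintype.card_subtype_compl, hC]
        rw [hfilter, card_fiber_eq_and_bounded, ih hcard, card_compl_subtype]
      · rw [Nat.cast_eq_zero, card_eq_zero, filter_eq_empty_iff]
        rintro g hg rfl
        exact hs ((mem_filter.mp hg).2 c₀)
    rw [card_eq_sum_card_fiberwise (fun g _ => mem_univ ({v | g v = c₀} : Finset V)),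
      Nat.cast_sum, sum_congr rfl fun s _ => fiber_count s, ← powerset_univ,
      sum_powerset_apply_card fun j =>
        if j < i then ((k - j)! : ℝ) * (((PowerSeries.exp ℝ).trunc i) ^ r).coeff (k - j) else 0,
      card_univ, pow_succ', factorial_mul_coeff_trunc_exp_mul]

end FiberCounting

lemma prod_ite_eq_pow_mul_pow {V M : Type*} [Fintype V] [CommMonoid M] (P : V → Prop)
    [DecidablePred P] (a b : M) :
    ∏ v, (if P v then a else b) = a ^ #{v | P v} * b ^ (Fintype.card V - #{v | P v}) := by
  have hsplit := card_filter_add_card_filter_not (s := univ) P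
  rw [card_univ] at hsplit
  rw [prod_ite, prod_const, prod_const, ← hsplit, Nat.add_sub_cancel_left]

lemma card_wins_filter_card_eq (n m : ℕ) (cstar : Fin m) (i : ℕ) :
    (#{f ∈ wins n m cstar | #{v | f v = cstar} = i} : ℝ) =
      n.choose i * ((n - i)! * phi n m i) := by
  have fiber_count (s : Finset (Fin n)) (hs : s ∈ powersetCard i univ) :
      (#{f ∈ {f ∈ wins n m cstar | #{v | f v = cstar} = i} |
          ({v | f v = cstar} : Finset _) = s} : ℝ) = (n - i)! * phi n m i := by
    rw [mem_powersetCard_univ] at hs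
    have hcount : #{f ∈ {f ∈ wins n m cstar | #{v | f v = cstar} = i} |
          ({v | f v = cstar} : Finset _) = s} =
        #(boundedFiberMaps {v // v ∉ s} {c // c ≠ cstar} i) := by
      convert card_fiber_eq_and_bounded cstar s i using 2
      ext f
      simp only [wins, mem_filter, mem_univ, true_and]
      constructor
      · rintro ⟨⟨hwin, rfl⟩, hfs⟩
        exact ⟨hfs, hwin⟩
      · rintro ⟨hfs, hlt⟩
        have hi : #{v | f v = cstar} = i := hfs ▸ hs
        exact ⟨⟨hi ▸ hlt, hi⟩, hfs⟩
    have hcard : Fintype.card {c // c ≠ cstar} = m - 1 := by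
      simp [Fintype.card_subtype_compl]
    rw [hcount, card_boundedFiberMaps, card_compl_subtype, hcard,
      Fintype.card_fin, hs, phi_eq_coeff_trunc_exp_pow]
  rw [card_eq_sum_card_fiberwise (f := fun f => ({v | f v = cstar} : Finset _))
      (t := powersetCard i univ) fun f hf => ?_, Nat.cast_sum,
    sum_congr rfl fiber_count, sum_const, card_powersetCard, card_univ, Fintype.card_fin,
    nsmul_eq_mul]
  exact mem_powersetCard_univ.mpr (mem_filter.mp hf).2

lemma Knorm_eq (n m : ℕ) (p : ℝ) : Knorm n m p = (p + ((m : ℝ) - 1) * (1 - p)) ^ n := by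
  rw [add_pow, Knorm]
  refine sum_congr rfl fun j _ => ?_
  rw [mul_pow]
  ring

lemma Tprob_eq_sum_range (n m : ℕ) (p : ℝ) :
    Tprob n m p = (1 / (p + ((m : ℝ) - 1) * (1 - p)) ^ n) *
      ∑ i ∈ range (n + 1), phi n m i * (n - i)! * n.choose i * p ^ i * (1 - p) ^ (n - i) := by
  rw [Tprob, Knorm_eq]
  congr 1
  refine sum_subset (fun i hi => mem_range_succ_iff.mpr (mem_Icc.mp hi).2) fun i hi hiIcc => ?_
  have hlt : i < ⌈(n : ℚ) / m⌉₊ := by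
    by_contra hge
    exact hiIcc (mem_Icc.mpr ⟨not_lt.mp hge, mem_range_succ_iff.mp hi⟩)
  rw [phi_eq_zero_of_lt_ceil hlt]
  ring

theorem stmt1_general (n m : ℕ) (p : ℝ)
    (cstar : Fin m) (D : ℝ) (hD : D = p + ((m : ℝ) - 1) * (1 - p)) :
    (∑ f ∈ wins n m cstar,
        ∏ v : Fin n, (if f v = cstar then p / D else (1 - p) / D)) = Tprob n m p := by
  have count_le (f : Fin n → Fin m) : #{v | f v = cstar} ≤ n := by
    simpa using card_le_univ ({v | f v = cstar} : Finset _)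
  have weight (f : Fin n → Fin m) :
      ∏ v, (if f v = cstar then p / D else (1 - p) / D) =
        1 / D ^ n * (p ^ #{v | f v = cstar} * (1 - p) ^ (n - #{v | f v = cstar})) := by
    rw [prod_ite_eq_pow_mul_pow, Fintype.card_fin, div_pow, div_pow, div_mul_div_comm, ← pow_add,
      Nat.add_sub_cancel' (count_le f), one_div_mul_eq_div]
  rw [sum_congr rfl fun f _ => weight f, ← mul_sum,
    ← sum_fiberwise_of_maps_to fun f _ => mem_range_succ_iff.mpr (count_le f),
    Tprob_eq_sum_range, ← hD]
  congr 1
  refine sum_congr rfl fun i _ => ?_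
  rw [sum_congr rfl fun f hf => by rw [(mem_filter.mp hf).2], sum_const, nsmul_eq_mul,
    card_wins_filter_card_eq]
  ring

/-- If `n` classifiers vote independently, each voting for the correct class `cstar` with
probability `p/D` and for each of the other `m-1` classes with probability `(1-p)/D`, where
`D = p + (m-1)(1-p)`, then the probability that `cstar` is the unique Plurality winner
equals `T(p)`. -/
theorem stmt1 (n m : ℕ) (hn : 1 ≤ n) (hm : 2 ≤ m) (p : ℝ) (hp0 : 0 ≤ p) (hp1 : p ≤ 1)
    (cstar : Fin m) (D : ℝ) (hD : D = p + ((m : ℝ) - 1) * (1 - p)) :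
    (∑ f ∈ wins n m cstar,
        ∏ v : Fin n, (if f v = cstar then p / D else (1 - p) / D)) = Tprob n m p :=
  stmt1_general n m p cstar D hD
end

section
/- For every integer n ≥ 1, the polynomial function T_n(p) = Σ_{i=⌈n/2⌉}^{n} C(n,i) p^i (1−p)^{n−i} has derivative with respect to p equal to ⌈n/2⌉ · C(n, ⌈n/2⌉) · p^{⌈n/2⌉ − 1} · (1−p)^{n − ⌈n/2⌉} at every real p. -/
open Finset

/-- `T_n(p) = ∑_{i=⌈n/2⌉}^n C(n,i) p^i (1-p)^(n-i)`. -/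
noncomputable def Tn (n : ℕ) (p : ℝ) : ℝ :=
  ∑ i ∈ Finset.Icc (⌈(n : ℚ) / 2⌉₊) n, (n.choose i : ℝ) * p ^ i * (1 - p) ^ (n - i)

/-!
Differentiating `C(n,i) p^i (1-p)^(n-i)` gives `f i - f (i+1)` with
`f i = binomialTailDeriv n i p = i C(n,i) p^(i-1) (1-p)^(n-i)`, because `(i+1) C(n,i+1) = (n-i) C(n,i)`.
Hence the derivative of the upper binomial tail `∑_{i=k}^n` telescopes to `f k`.
-/

noncomputable def binomialTail (n k : ℕ) (p : ℝ) : ℝ :=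
  ∑ i ∈ Icc k n, (n.choose i : ℝ) * p ^ i * (1 - p) ^ (n - i)

noncomputable def binomialTailDeriv (n k : ℕ) (p : ℝ) : ℝ :=
  k * n.choose k * p ^ (k - 1) * (1 - p) ^ (n - k)

theorem binomialTailDeriv_of_lt {n k : ℕ} (h : n < k) (p : ℝ) : binomialTailDeriv n k p = 0 := by
  simp [binomialTailDeriv, Nat.choose_eq_zero_of_lt h]

theorem hasDerivAt_choose_mul_pow_mul_one_sub_pow (n i : ℕ) (p : ℝ) :
    HasDerivAt (fun q : ℝ => (n.choose i : ℝ) * q ^ i * (1 - q) ^ (n - i))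
      (binomialTailDeriv n i p - binomialTailDeriv n (i + 1) p) p := by
  have h_one_sub : HasDerivAt (fun q : ℝ => (1 - q) ^ (n - i))
      ((n - i : ℕ) * (1 - p) ^ (n - i - 1) * (-1)) p :=
    (hasDerivAt_pow (n - i) (1 - p)).comp p ((hasDerivAt_id p).const_sub 1)
  have h_choose : (n.choose (i + 1) : ℝ) * (i + 1) = n.choose i * (n - i : ℕ) := by
    exact_mod_cast Nat.choose_succ_right_eq n i
  have h := ((hasDerivAt_pow i p).fun_mul h_one_sub).const_mul (n.choose i : ℝ)
  simp only [← mul_assoc] at h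
  refine h.congr_deriv ?_
  simp only [binomialTailDeriv, Nat.add_sub_cancel, Nat.sub_add_eq, Nat.cast_succ]
  linear_combination (p ^ i * (1 - p) ^ (n - i - 1)) * h_choose

theorem hasDerivAt_binomialTail (n k : ℕ) (p : ℝ) :
    HasDerivAt (fun q => binomialTail n k q) (binomialTailDeriv n k p) p := by
  rcases lt_or_ge n k with hnk | hkn
  · simpa [binomialTail, Icc_eq_empty_of_lt hnk, binomialTailDeriv_of_lt hnk]
      using hasDerivAt_const p (0 : ℝ)
  · have h_telescope : ∑ i ∈ Icc k n,
        (binomialTailDeriv n i p - binomialTailDeriv n (i + 1) p) = binomialTailDeriv n k p := by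
      rw [← neg_inj, ← sum_neg_distrib]
      simp only [neg_sub]
      rw [sum_Icc_sub hkn (binomialTailDeriv n · p), binomialTailDeriv_of_lt n.lt_succ_self,
        zero_sub]
    have h := HasDerivAt.fun_sum (u := Icc k n) fun i _ =>
      hasDerivAt_choose_mul_pow_mul_one_sub_pow n i p
    rwa [h_telescope] at h

theorem stmt7_general (n : ℕ) (p : ℝ) :
    HasDerivAt (fun q : ℝ => Tn n q)
      ((⌈(n : ℚ) / 2⌉₊ : ℝ) * (n.choose ⌈(n : ℚ) / 2⌉₊ : ℝ)
        * p ^ (⌈(n : ℚ) / 2⌉₊ - 1) * (1 - p) ^ (n - ⌈(n : ℚ) / 2⌉₊)) p :=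
  hasDerivAt_binomialTail n _ p

/-- For every `n ≥ 1`, the derivative of `T_n` with respect to `p` equals
`⌈n/2⌉ · C(n,⌈n/2⌉) · p^(⌈n/2⌉-1) · (1-p)^(n-⌈n/2⌉)` at every real `p`. -/
theorem stmt7 (n : ℕ) (hn : 1 ≤ n) (p : ℝ) :
    HasDerivAt (fun q : ℝ => Tn n q)
      ((⌈(n : ℚ) / 2⌉₊ : ℝ) * (n.choose ⌈(n : ℚ) / 2⌉₊ : ℝ)
        * p ^ (⌈(n : ℚ) / 2⌉₊ - 1) * (1 - p) ^ (n - ⌈(n : ℚ) / 2⌉₊)) p :=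
  stmt7_general n p
end

section
/- For every real p ∈ [0,1] with p ≠ 1/2, the limit as n → ∞ of the derivative of T_n at p, namely lim_{n→∞} ⌈n/2⌉ · C(n, ⌈n/2⌉) · p^{⌈n/2⌉ − 1} · (1−p)^{n − ⌈n/2⌉}, equals 0. -/
/-!
With `k = ⌈n/2⌉` we have `n ≤ 2k ≤ n + 1`, so `C(n,k) ≤ 2ⁿ ≤ 4ᵏ` and `n - k ≥ k - 1`. Hence the
`n`-th term is at most `4 k qᵏ⁻¹` with `q = 4p(1-p)`, and `q < 1` exactly when `p ≠ 1/2`;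
since `k → ∞`, the bound tends to `0`.
-/

open Filter Topology

lemma le_two_mul_natCeil_half (n : ℕ) : n ≤ 2 * ⌈(n : ℚ) / 2⌉₊ := by
  have h := Nat.le_ceil ((n : ℚ) / 2)
  exact_mod_cast (by linarith : (n : ℚ) ≤ 2 * ⌈(n : ℚ) / 2⌉₊)

lemma two_mul_natCeil_half_le (n : ℕ) : 2 * ⌈(n : ℚ) / 2⌉₊ ≤ n + 1 := by
  have h := Nat.ceil_lt_add_one (by positivity : (0 : ℚ) ≤ n / 2)
  have h2 : 2 * ⌈(n : ℚ) / 2⌉₊ < n + 2 := by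
    exact_mod_cast (by linarith : (2 * ⌈(n : ℚ) / 2⌉₊ : ℚ) < n + 2)
  omega

lemma tendsto_natCeil_half_atTop : Tendsto (fun n : ℕ => ⌈(n : ℚ) / 2⌉₊) atTop atTop :=
  tendsto_atTop_mono (fun n => by have := le_two_mul_natCeil_half n; omega)
    (Nat.tendsto_div_const_atTop two_ne_zero)

lemma four_mul_mul_one_sub_lt_one {p : ℝ} (hp : p ≠ 1 / 2) : 4 * p * (1 - p) < 1 := by
  have : 0 < (2 * p - 1) ^ 2 := by
    have : 2 * p - 1 ≠ 0 := fun h => hp (by linarith)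
    positivity
  nlinarith

lemma tendsto_natCast_mul_pow_pred {q : ℝ} (hq0 : 0 ≤ q) (hq1 : q < 1) :
    Tendsto (fun k : ℕ => (k : ℝ) * q ^ (k - 1)) atTop (𝓝 0) := by
  rw [← tendsto_add_atTop_iff_nat 1]
  have := (tendsto_self_mul_const_pow_of_lt_one hq0 hq1).add
    (tendsto_pow_atTop_nhds_zero_of_lt_one hq0 hq1)
  simpa [add_mul] using this

lemma natCast_mul_choose_mul_pow_le {p : ℝ} (hp0 : 0 ≤ p) (hp1 : p ≤ 1) {n k : ℕ}
    (hn : n ≤ 2 * k) (hk : 2 * k ≤ n + 1) :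
    (k : ℝ) * n.choose k * p ^ (k - 1) * (1 - p) ^ (n - k)
      ≤ 4 * ((k : ℝ) * (4 * p * (1 - p)) ^ (k - 1)) := by
  obtain _ | k := k
  · simp
  have h1p : 0 ≤ 1 - p := by linarith
  calc ((k + 1 : ℕ) : ℝ) * n.choose (k + 1) * p ^ k * (1 - p) ^ (n - (k + 1))
      ≤ ((k + 1 : ℕ) : ℝ) * 4 ^ (k + 1) * p ^ k * (1 - p) ^ k := by
        have hchoose : (n.choose (k + 1) : ℝ) ≤ 4 ^ (k + 1) := by
          rw [show (4 : ℝ) = 2 ^ 2 by norm_num, ← pow_mul]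
          exact_mod_cast (Nat.choose_le_two_pow n (k + 1)).trans
            (Nat.pow_le_pow_right two_pos hn)
        have hpow : (1 - p) ^ (n - (k + 1)) ≤ (1 - p) ^ k :=
          pow_le_pow_of_le_one h1p (by linarith) (by omega)
        gcongr
    _ = 4 * (((k + 1 : ℕ) : ℝ) * (4 * p * (1 - p)) ^ k) := by rw [mul_pow, mul_pow]; ring

/-- For every `p ∈ [0,1]` with `p ≠ 1/2`, the derivative of `T_n` at `p`, namely
`⌈n/2⌉ · C(n,⌈n/2⌉) · p^(⌈n/2⌉-1) · (1-p)^(n-⌈n/2⌉)`, tends to `0` as `n → ∞`. -/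
theorem stmt11 (p : ℝ) (hp0 : 0 ≤ p) (hp1 : p ≤ 1) (hp : p ≠ 1 / 2) :
    Tendsto (fun n : ℕ =>
        (⌈(n : ℚ) / 2⌉₊ : ℝ) * (n.choose ⌈(n : ℚ) / 2⌉₊ : ℝ)
          * p ^ (⌈(n : ℚ) / 2⌉₊ - 1) * (1 - p) ^ (n - ⌈(n : ℚ) / 2⌉₊))
      atTop (nhds 0) := by
  have h1p : 0 ≤ 1 - p := by linarith
  have hq0 : 0 ≤ 4 * p * (1 - p) := by positivity
  have hbound := ((tendsto_natCast_mul_pow_pred hq0 (four_mul_mul_one_sub_lt_one hp)).comp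
    tendsto_natCeil_half_atTop).const_mul 4
  rw [mul_zero] at hbound
  refine squeeze_zero (fun n => by positivity) (fun n => ?_) hbound
  exact natCast_mul_choose_mul_pow_le hp0 hp1 (le_two_mul_natCeil_half n)
    (two_mul_natCeil_half_le n)
end
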